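/- arXiv:1501.02788 — 2 statements merged into one kernel-verified Lean document; each statement's English description precedes it below -/
import Mathlib

section
/- Let a, c, k ∈ ℝ with k > 0, c < 0 and k² < c² − 4a. Set s := √(c² − 4a), γ := s/√(s² − k²), and define u : ℝ → ℝ by u(z) := k²/(√(s² − k²)·(γ − cos(k z))) − (s + c)/2. Then (1/2)·∫₀^{2π/k} u(z)² dz = −cπ + (π/(4k))·(√(c² − 4a) + c)². -/
/-!
After the substitution `θ = k z` the profile becomes `u = A / (γ - cos θ) - B` with
`A = k² / m`, `m = √(s² - k²)`, `B = (s + c) / 2`, so the momentum is a combination of the two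
classical integrals `∫₀^{2π} dθ / (γ - cos θ) = 2π / √(γ² - 1)` and
`∫₀^{2π} dθ / (γ - cos θ)² = 2πγ / (γ² - 1)^{3/2}`. The first is the Poisson integral of the
constant function `1` at the point `r = γ - √(γ² - 1)` of the unit disc; the second reduces to the
first because `(γ² - 1) / (γ - cos θ)² - γ / (γ - cos θ)` is the derivative of
`sin θ / (γ - cos θ)`, which is `2π`-periodic. Since `√(γ² - 1) = k / m`, the result collapses to
`-2cπ + 2πB² / k`.
-/

open Real intervalIntegral

theorem integral_poissonKernel_eq_two_pi {r : ℝ} (hr : |r| < 1) :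
    ∫ θ in 0..2 * π, (1 - r ^ 2) / (1 - 2 * r * cos θ + r ^ 2) = 2 * π := by
  have h := DiffContOnCl.circleAverage_poissonKernel_smul' (f := fun _ : ℂ => (1 : ℂ))
    (c := 0) (R := 1) (w := (r : ℂ)) diffContOnCl_const (by simpa using hr)
  have hnorm : ∀ θ : ℝ, ‖circleMap 0 1 θ - (r : ℂ)‖ ^ 2 = 1 - 2 * r * cos θ + r ^ 2 := by
    intro θ
    rw [← Complex.normSq_eq_norm_sq, Complex.normSq_apply]
    simp only [circleMap, Complex.ofReal_one, one_mul, zero_add, Complex.sub_re, Complex.exp_re,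
      Complex.mul_re, Complex.ofReal_re, Complex.I_re, mul_zero, Complex.ofReal_im, Complex.I_im,
      mul_one, sub_self, exp_zero, Complex.mul_im, add_zero, Complex.sub_im, Complex.exp_im,
      sub_zero]
    linear_combination sin_sq_add_cos_sq θ
  simp only [circleAverage_def, sub_zero, norm_circleMap_zero, hnorm, abs_one, one_pow,
    Complex.norm_real, norm_eq_abs, sq_abs, Complex.real_smul, mul_one] at h
  rw [integral_ofReal, ← Complex.ofReal_mul, Complex.ofReal_eq_one] at h
  field_simp at h
  exact h

section
variable {γ : ℝ}

theorem sub_cos_pos (hγ : 1 < γ) (θ : ℝ) : 0 < γ - cos θ := by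
  linarith [cos_le_one θ]

theorem continuous_inv_sub_cos (hγ : 1 < γ) : Continuous fun θ => (γ - cos θ)⁻¹ :=
  (continuous_const.sub continuous_cos).inv₀ fun θ => (sub_cos_pos hγ θ).ne'

theorem integral_inv_sub_cos (hγ : 1 < γ) :
    ∫ θ in 0..2 * π, (γ - cos θ)⁻¹ = 2 * π / √(γ ^ 2 - 1) := by
  set b := √(γ ^ 2 - 1)
  have hb : 0 < b := sqrt_pos.2 (by nlinarith)
  have hb2 : b ^ 2 = γ ^ 2 - 1 := sq_sqrt (by nlinarith)
  have hr0 : 0 < γ - b := by nlinarith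
  have hr : |γ - b| < 1 := abs_lt.2 ⟨by linarith, by nlinarith⟩
  -- `r = γ - b` is the root in `(0, 1)` of `r² - 2γr + 1`
  have hpoisson : ∀ θ, (γ - cos θ)⁻¹
      = b⁻¹ * ((1 - (γ - b) ^ 2) / (1 - 2 * (γ - b) * cos θ + (γ - b) ^ 2)) := by
    intro θ
    have hθ := sub_cos_pos hγ θ
    have hden : 1 - 2 * (γ - b) * cos θ + (γ - b) ^ 2 = 2 * (γ - b) * (γ - cos θ) := by
      linear_combination hb2
    rw [hden]
    field_simp
    linear_combination (-1) * hb2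
  simp_rw [hpoisson]
  rw [integral_const_mul, integral_poissonKernel_eq_two_pi hr]
  field_simp

theorem hasDerivAt_sin_div_sub_cos {θ : ℝ} (h : γ - cos θ ≠ 0) :
    HasDerivAt (fun x => sin x / (γ - cos x)) ((γ * cos θ - 1) / (γ - cos θ) ^ 2) θ := by
  have hden : HasDerivAt (fun x => γ - cos x) (sin θ) θ := by
    simpa using (hasDerivAt_cos θ).const_sub γ
  refine ((hasDerivAt_sin θ).div hden h).congr_deriv ?_
  linear_combination (-1 / (γ - cos θ) ^ 2) * sin_sq_add_cos_sq θ

theorem integral_inv_sub_cos_sq (hγ : 1 < γ) :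
    ∫ θ in 0..2 * π, (γ - cos θ)⁻¹ ^ 2 = 2 * π * γ / ((γ ^ 2 - 1) * √(γ ^ 2 - 1)) := by
  have hγ2 : γ ^ 2 - 1 ≠ 0 := by nlinarith
  have hderiv : ∀ θ, HasDerivAt (fun x => sin x / (γ - cos x))
      ((γ * cos θ - 1) / (γ - cos θ) ^ 2) θ := fun θ =>
    hasDerivAt_sin_div_sub_cos (sub_cos_pos hγ θ).ne'
  have hsplit : ∀ θ, (γ - cos θ)⁻¹ ^ 2
      = (γ ^ 2 - 1)⁻¹ * (γ * (γ - cos θ)⁻¹ + (γ * cos θ - 1) / (γ - cos θ) ^ 2) := by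
    intro θ
    have hθ := (sub_cos_pos hγ θ).ne'
    field_simp
    ring
  have hcont := continuous_inv_sub_cos hγ
  have hcont' : Continuous fun θ => (γ * cos θ - 1) / (γ - cos θ) ^ 2 :=
    (continuous_const.mul continuous_cos).sub continuous_const |>.div
      ((continuous_const.sub continuous_cos).pow 2) fun θ => pow_ne_zero 2 (sub_cos_pos hγ θ).ne'
  simp_rw [hsplit]
  rw [integral_const_mul, integral_add ((hcont.const_mul γ).intervalIntegrable _ _)
      (hcont'.intervalIntegrable _ _), integral_const_mul, integral_inv_sub_cos hγ,
    integral_eq_sub_of_hasDerivAt (fun θ _ => hderiv θ) (hcont'.intervalIntegrable _ _)]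
  simp only [sin_two_pi, sin_zero, zero_div, sub_zero, add_zero]
  field_simp

theorem integral_sq_mul_inv_sub_cos_sub (hγ : 1 < γ) (A B : ℝ) :
    ∫ θ in 0..2 * π, (A * (γ - cos θ)⁻¹ - B) ^ 2
      = 2 * π * (A ^ 2 * γ / ((γ ^ 2 - 1) * √(γ ^ 2 - 1)) - 2 * A * B / √(γ ^ 2 - 1) + B ^ 2) := by
  have hcont := continuous_inv_sub_cos hγ
  have hexpand : ∀ θ, (A * (γ - cos θ)⁻¹ - B) ^ 2
      = A ^ 2 * (γ - cos θ)⁻¹ ^ 2 - 2 * A * B * (γ - cos θ)⁻¹ + B ^ 2 := fun θ => by ring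
  simp_rw [hexpand]
  rw [integral_add, integral_sub, integral_const_mul, integral_const_mul,
    integral_inv_sub_cos_sq hγ, integral_inv_sub_cos hγ, integral_const]
  · simp only [sub_zero, smul_eq_mul]
    ring
  all_goals exact Continuous.intervalIntegrable (by fun_prop) _ _

end

theorem stmt_11_general (a c k : ℝ) (hk : 0 < k) (hlt : k ^ 2 < c ^ 2 - 4 * a)
    (s γ : ℝ) (hs : s = Real.sqrt (c ^ 2 - 4 * a))
    (hγ : γ = s / Real.sqrt (s ^ 2 - k ^ 2))
    (u : ℝ → ℝ)
    (hu : ∀ z : ℝ, u z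
      = k ^ 2 / (Real.sqrt (s ^ 2 - k ^ 2) * (γ - Real.cos (k * z))) - (s + c) / 2) :
    (1 / 2) * ∫ z in (0:ℝ)..(2 * Real.pi / k), (u z) ^ 2
      = -c * Real.pi + (Real.pi / (4 * k)) * (Real.sqrt (c ^ 2 - 4 * a) + c) ^ 2 := by
  have hs2 : s ^ 2 = c ^ 2 - 4 * a := hs ▸ sq_sqrt (by nlinarith)
  rw [← hs]
  set m := √(s ^ 2 - k ^ 2)
  have hm : 0 < m := sqrt_pos.2 (by linarith)
  have hm2 : m ^ 2 = s ^ 2 - k ^ 2 := sq_sqrt (by linarith)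
  have hγ1 : 1 < γ := by
    rw [hγ, one_lt_div hm]
    nlinarith [sqrt_nonneg (c ^ 2 - 4 * a)]
  have hγ2 : γ ^ 2 - 1 = (k / m) ^ 2 := by
    rw [hγ]
    field_simp
    linear_combination (-1) * hm2
  have hrescale : ∫ z in 0..2 * π / k, u z ^ 2
      = k⁻¹ * ∫ θ in 0..2 * π, (k ^ 2 / m * (γ - cos θ)⁻¹ - (s + c) / 2) ^ 2 := by
    have hu' : ∀ z, u z ^ 2 = (k ^ 2 / m * (γ - cos (k * z))⁻¹ - (s + c) / 2) ^ 2 := fun z => by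
      rw [hu, div_mul_eq_div_div, div_eq_mul_inv]
    simp_rw [hu']
    rw [integral_comp_mul_left (fun θ => (k ^ 2 / m * (γ - cos θ)⁻¹ - (s + c) / 2) ^ 2) hk.ne',
      mul_zero, mul_div_cancel₀ _ hk.ne', smul_eq_mul]
  rw [hrescale, integral_sq_mul_inv_sub_cos_sub hγ1, hγ2, sqrt_sq (by positivity), hγ]
  field_simp
  ring

/-- The momentum over one period of Benjamin's explicit `2π/k`-periodic
traveling-wave profile of the Benjamin–Ono equation:
`(1/2)∫₀^{2π/k} u² = −cπ + (π/(4k))(√(c²−4a) + c)²`. -/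
theorem stmt_11 (a c k : ℝ) (hk : 0 < k) (hc : c < 0) (hlt : k ^ 2 < c ^ 2 - 4 * a)
    (s γ : ℝ) (hs : s = Real.sqrt (c ^ 2 - 4 * a))
    (hγ : γ = s / Real.sqrt (s ^ 2 - k ^ 2))
    (u : ℝ → ℝ)
    (hu : ∀ z : ℝ, u z
      = k ^ 2 / (Real.sqrt (s ^ 2 - k ^ 2) * (γ - Real.cos (k * z))) - (s + c) / 2) :
    (1 / 2) * ∫ z in (0:ℝ)..(2 * Real.pi / k), (u z) ^ 2
      = -c * Real.pi + (Real.pi / (4 * k)) * (Real.sqrt (c ^ 2 - 4 * a) + c) ^ 2 :=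
  stmt_11_general a c k hk hlt s γ hs hγ u hu
end

section
/- Define m(k) := √(tanh(k)/k) for k > 0, g(k) := √(k·tanh(k)) − k, and Γ(k) := 2(m(k) − m(2k)) + g'(k), where g' denotes the derivative of g. Then Γ(1) > 0 and Γ(2) < 0; consequently, by continuity of Γ on (0,∞), there exists k* ∈ (1,2) with Γ(k*) = 0. -/
/-!
Since `tanh' = 1 - tanh²`, the derivative `g'` has a closed form on `(0, ∞)`, which turns `Γ`
into an explicit continuous function of `tanh k` and `tanh 2k`. The nine-digit bounds on `e`
locate `tanh 1`, `tanh 2`, `tanh 4` well enough to fix the signs of `Γ 1 ≈ 0.034` and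
`Γ 2 ≈ -0.21`, and the intermediate value theorem gives the zero.
-/

open Real Set

namespace Real

theorem tanh_eq_one_sub (x : ℝ) : tanh x = 1 - 2 / (exp (2 * x) + 1) := by
  have h : exp (2 * x) = exp x * exp x := by rw [← exp_add, two_mul]
  rw [tanh_eq, h, exp_neg]
  field_simp
  ring

theorem tanh_pos {x : ℝ} (hx : 0 < x) : 0 < tanh x := by
  have h : 1 < exp (2 * x) := one_lt_exp_iff.2 (by positivity)
  rw [tanh_eq_one_sub, sub_pos, div_lt_one (by positivity)]
  linarith

theorem hasDerivAt_tanh (x : ℝ) : HasDerivAt tanh (1 - tanh x ^ 2) x := by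
  have hc := (cosh_pos x).ne'
  have htanh : tanh = sinh / cosh := funext tanh_eq_sinh_div_cosh
  rw [htanh]
  refine ((hasDerivAt_sinh x).div (hasDerivAt_cosh x) hc).congr_deriv ?_
  simp only [Pi.div_apply]
  field_simp

theorem continuous_tanh : Continuous tanh :=
  continuous_iff_continuousAt.2 fun x => (hasDerivAt_tanh x).continuousAt

end Real

lemma tanh_natCast_mem_Ioo {n : ℕ} (hn : n ≠ 0) :
    tanh n ∈ Ioo (1 - 2 / (2.7182818283 ^ (2 * n) + 1)) (1 - 2 / (2.7182818286 ^ (2 * n) + 1)) := by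
  have hexp : exp (2 * n) = exp 1 ^ (2 * n) := by
    rw [exp_one_pow, Nat.cast_mul, Nat.cast_ofNat]
  have h2n : 2 * n ≠ 0 := by positivity
  have hl := pow_lt_pow_left₀ exp_one_gt_d9 (by norm_num) h2n
  have hu := pow_lt_pow_left₀ exp_one_lt_d9 (exp_pos 1).le h2n
  rw [tanh_eq_one_sub, hexp]
  constructor <;> gcongr

lemma tanh_one_mem_Ioo : tanh 1 ∈ Ioo 0.7615 0.7616 := by
  have h := tanh_natCast_mem_Ioo one_ne_zero
  rw [Nat.cast_one] at h
  exact Ioo_subset_Ioo (by norm_num) (by norm_num) h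

lemma tanh_two_mem_Ioo : tanh 2 ∈ Ioo 0.964 0.9641 := by
  have h := tanh_natCast_mem_Ioo two_ne_zero
  rw [Nat.cast_ofNat] at h
  exact Ioo_subset_Ioo (by norm_num) (by norm_num) h

lemma lt_tanh_four : 0.9993 < tanh 4 := by
  have h := (tanh_natCast_mem_Ioo (n := 4) (by norm_num)).1
  rw [Nat.cast_ofNat] at h
  exact lt_trans (by norm_num) h

lemma hasDerivAt_sqrt_mul_tanh_sub_self {k : ℝ} (hk : 0 < k) :
    HasDerivAt (fun x => √(x * tanh x) - x)
      ((tanh k + k * (1 - tanh k ^ 2)) / (2 * √(k * tanh k)) - 1) k := by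
  have hprod : HasDerivAt (fun x => x * tanh x) (tanh k + k * (1 - tanh k ^ 2)) k := by
    simpa using (hasDerivAt_id' k).fun_mul (hasDerivAt_tanh k)
  exact (hprod.sqrt (mul_pos hk (tanh_pos hk)).ne').sub (hasDerivAt_id k)

/-- `Γ` with `g'` replaced by its closed form. -/
noncomputable def whithamGamma (k : ℝ) : ℝ :=
  2 * (√(tanh k / k) - √(tanh (2 * k) / (2 * k))) +
    ((tanh k + k * (1 - tanh k ^ 2)) / (2 * √(k * tanh k)) - 1)

lemma continuousOn_whithamGamma : ContinuousOn whithamGamma (Ioi 0) := by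
  have hk : ∀ k ∈ Ioi (0 : ℝ), k ≠ 0 := fun k hk => ne_of_gt hk
  have h2k : ∀ k ∈ Ioi (0 : ℝ), 2 * k ≠ 0 := fun k hk => by simp_all
  have hden : ∀ k ∈ Ioi (0 : ℝ), 2 * √(k * tanh k) ≠ 0 := fun k (hk : 0 < k) =>
    (mul_pos two_pos (sqrt_pos.2 (mul_pos hk (tanh_pos hk)))).ne'
  have := continuous_tanh
  unfold whithamGamma
  fun_prop (disch := assumption)

lemma whithamGamma_one_pos : 0 < whithamGamma 1 := by
  obtain ⟨ht1, ht1'⟩ := tanh_one_mem_Ioo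
  have ht2 := tanh_two_mem_Ioo.2
  have hs1 : 0.8726 < √(tanh 1) := (lt_sqrt (by norm_num)).2 (by linarith)
  have hs1' : √(tanh 1) < 0.8727 := (sqrt_lt' (by norm_num)).2 (by linarith)
  have hs2 : √(tanh 2 / 2) < 0.6944 := (sqrt_lt' (by norm_num)).2 (by linarith)
  have hq : 0.6769 < (tanh 1 + (1 - tanh 1 ^ 2)) / (2 * √(tanh 1)) := by
    rw [lt_div_iff₀ (by positivity)]
    nlinarith
  norm_num only [whithamGamma, mul_one, one_mul, div_one]
  linarith

lemma whithamGamma_two_neg : whithamGamma 2 < 0 := by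
  obtain ⟨ht2, ht2'⟩ := tanh_two_mem_Ioo
  have ht4 := lt_tanh_four
  have hs2 : √(tanh 2 / 2) < 0.6944 := (sqrt_lt' (by norm_num)).2 (by linarith)
  have hs4 : 0.4998 < √(tanh 4 / 4) := (lt_sqrt (by norm_num)).2 (by linarith)
  have hs : 1.388 < √(2 * tanh 2) := (lt_sqrt (by norm_num)).2 (by linarith)
  have hq : (tanh 2 + 2 * (1 - tanh 2 ^ 2)) / (2 * √(2 * tanh 2)) < 0.3983 := by
    rw [div_lt_iff₀ (by positivity)]
    nlinarith
  norm_num only [whithamGamma, mul_one, one_mul, div_one]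
  linarith

/-- Sign change of the Whitham modulational instability function
`Γ(k) = 2(m(k) − m(2k)) + g'(k)`, with `m(k) = √(tanh k / k)` and
`g(k) = √(k tanh k) − k`: `Γ(1) > 0`, `Γ(2) < 0`, hence `Γ` vanishes at some
`k* ∈ (1,2)`. -/
theorem stmt_16 (m g Γ : ℝ → ℝ)
    (hm : ∀ k : ℝ, m k = Real.sqrt (Real.tanh k / k))
    (hg : ∀ k : ℝ, g k = Real.sqrt (k * Real.tanh k) - k)
    (hΓ : ∀ k : ℝ, Γ k = 2 * (m k - m (2 * k)) + deriv g k) :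
    0 < Γ 1 ∧ Γ 2 < 0 ∧ ∃ kstar ∈ Set.Ioo (1 : ℝ) 2, Γ kstar = 0 := by
  have hΓ_eq : EqOn Γ whithamGamma (Ioi 0) := fun k hk => by
    rw [hΓ, hm, hm, funext hg, (hasDerivAt_sqrt_mul_tanh_sub_self hk).deriv, whithamGamma]
  have h1 : 0 < Γ 1 := hΓ_eq (mem_Ioi.2 one_pos) ▸ whithamGamma_one_pos
  have h2 : Γ 2 < 0 := hΓ_eq (mem_Ioi.2 two_pos) ▸ whithamGamma_two_neg
  have hcont : ContinuousOn Γ (Icc 1 2) :=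
    (continuousOn_whithamGamma.congr hΓ_eq).mono fun k hk => one_pos.trans_le hk.1
  obtain ⟨kstar, hkstar, hzero⟩ := intermediate_value_Ioo' one_le_two hcont ⟨h2, h1⟩
  exact ⟨h1, h2, kstar, hkstar, hzero⟩
end
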